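/- For the t-star S = {F ∈ C([n],k) : [t] ⊆ F} (where t ≤ k ≤ n), the codegree squared sum equals co₂(S) = C(n-t,k-t)·(t + (n-k+1)(k-t)). -/

import Mathlib

/-!
For a `(k-1)`-set `E`, the members of the star of `T` containing `E` are the `k`-sets containing
`T ∪ E`, and `|T ∪ E| = k - 1 + |T \ E|`. Hence `d(E) = n - k + 1` if `T ⊆ E`, `d(E) = 1` if
`|T \ E| = 1`, and `d(E) = 0` otherwise. A `(k-1)`-set is determined by its trace on `T` and its
part outside `T`, so there are `C(n-t, k-1-t)` sets of the first kind and `t·C(n-t, k-t)` of the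
second, and `C(n-t, k-1-t)(n-k+1) = C(n-t, k-t)(k-t)` merges the two terms.
-/

open Finset

section Counting

variable {α : Type*} [DecidableEq α]

theorem card_filter_powersetCard_inter_eq {s T U : Finset α} {m : ℕ} (hTs : T ⊆ s)
    (hUT : U ⊆ T) (hUm : #U ≤ m) :
    #{E ∈ s.powersetCard m | E ∩ T = U} = (#s - #T).choose (m - #U) := by
  rw [← card_sdiff_of_subset hTs, ← card_powersetCard]
  refine card_nbij' (· \ T) (· ∪ U) ?_ ?_ ?_ ?_
  · intro E hE
    simp only [coe_filter, Set.mem_ofPred_eq, mem_powersetCard, mem_coe] at hE ⊢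
    obtain ⟨⟨hEs, rfl⟩, hET⟩ := hE
    exact ⟨sdiff_subset_sdiff hEs le_rfl, by rw [card_sdiff, inter_comm, hET]⟩
  · intro C hC
    simp only [coe_filter, Set.mem_ofPred_eq, mem_powersetCard, mem_coe,
      subset_sdiff] at hC ⊢
    obtain ⟨⟨hCs, hCT⟩, hCm⟩ := hC
    have hCU : Disjoint C U := hCT.mono_right hUT
    refine ⟨⟨union_subset hCs (hUT.trans hTs), by rw [card_union_of_disjoint hCU]; omega⟩,
      ?_⟩
    rw [union_inter_distrib_right, disjoint_iff_inter_eq_empty.mp hCT, inter_eq_left.mpr hUT,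
      empty_union]
  · intro E hE
    simp only [coe_filter, Set.mem_ofPred_eq] at hE
    simp only [← hE.2, sdiff_union_inter]
  · intro C hC
    simp only [mem_coe, mem_powersetCard, subset_sdiff] at hC
    change (C ∪ U) \ T = C
    rw [union_sdiff_distrib, sdiff_eq_empty_iff_subset.mpr hUT, union_empty,
      hC.1.2.sdiff_eq_left]

theorem card_filter_powersetCard_superset {s B : Finset α} {m : ℕ} (hBs : B ⊆ s)
    (hBm : #B ≤ m) :
    #{A ∈ s.powersetCard m | B ⊆ A} = (#s - #B).choose (m - #B) := by
  simpa only [inter_eq_right] using card_filter_powersetCard_inter_eq hBs subset_rfl hBm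

theorem filter_powersetCard_superset_eq_empty {s B : Finset α} {m : ℕ} (hBm : m < #B) :
    {A ∈ s.powersetCard m | B ⊆ A} = ∅ :=
  filter_eq_empty_iff.mpr fun _ hA hBA =>
    (card_le_card hBA).not_gt ((mem_powersetCard.mp hA).2 ▸ hBm)

theorem card_filter_powersetCard_superset_mul {s T : Finset α} {m : ℕ} (hTs : T ⊆ s)
    (hTm : #T ≤ m + 1) :
    #{E ∈ s.powersetCard m | T ⊆ E} * (#s - m) =
      (#s - #T).choose (m + 1 - #T) * (m + 1 - #T) := by
  obtain hTm | hTm := hTm.eq_or_lt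
  · rw [filter_powersetCard_superset_eq_empty (by omega), hTm, Nat.sub_self, mul_zero,
      card_empty, zero_mul]
  · rw [card_filter_powersetCard_superset hTs (by omega), show m + 1 - #T = m - #T + 1 by omega,
      Nat.choose_succ_right_eq]
    congr 1
    have := card_le_card hTs
    omega

theorem sdiff_eq_singleton_iff {T E : Finset α} {x : α} :
    T \ E = {x} ↔ x ∈ T ∧ E ∩ T = T.erase x := by
  simp only [Finset.ext_iff, mem_sdiff, mem_singleton, mem_inter, mem_erase]
  grind

theorem card_filter_powersetCard_card_sdiff_eq_one {s T : Finset α} {m : ℕ} (hTs : T ⊆ s)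
    (hTm : #T ≤ m + 1) :
    #{E ∈ s.powersetCard m | #(T \ E) = 1} = #T * (#s - #T).choose (m + 1 - #T) := by
  have hunion : {E ∈ s.powersetCard m | #(T \ E) = 1} =
      T.biUnion fun x => {E ∈ s.powersetCard m | E ∩ T = T.erase x} := by
    ext E
    simp only [mem_filter, mem_biUnion, card_eq_one, sdiff_eq_singleton_iff]
    tauto
  have hdisj :
      (T : Set α).PairwiseDisjoint fun x => {E ∈ s.powersetCard m | E ∩ T = T.erase x} :=
    fun x hx y hy hxy => disjoint_filter.mpr fun E _ hEx hEy =>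
      hxy (T.erase_injOn hx hy (hEx.symm.trans hEy))
  rw [hunion, card_biUnion hdisj, ← smul_eq_mul, ← sum_const]
  refine sum_congr rfl fun x hx => ?_
  have hT : 1 ≤ #T := card_pos.mpr ⟨x, hx⟩
  rw [card_filter_powersetCard_inter_eq hTs (erase_subset x T)
    (by rw [card_erase_of_mem hx]; omega), card_erase_of_mem hx]
  congr 1
  omega

def codegree (S : Finset (Finset α)) (E : Finset α) : ℕ := #{A ∈ S | E ⊆ A}

end Counting

section Star

variable {α : Type*} [DecidableEq α] [Fintype α]

def starFamily (T : Finset α) (k : ℕ) : Finset (Finset α) :=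
  {A ∈ univ.powersetCard k | T ⊆ A}

theorem codegree_starFamily (T E : Finset α) (k : ℕ) :
    codegree (starFamily T k) E = #{A ∈ univ.powersetCard k | T ∪ E ⊆ A} := by
  simp only [codegree, starFamily, filter_filter, union_subset_iff]

theorem codegree_starFamily_sq {T E : Finset α} {m : ℕ} (hE : #E = m) :
    codegree (starFamily T (m + 1)) E ^ 2 =
      (if T ⊆ E then (Fintype.card α - m) ^ 2 else 0) + if #(T \ E) = 1 then 1 else 0 := by
  have hcard : #(T ∪ E) = #(T \ E) + m := by rw [← hE, card_sdiff_add_card, union_comm]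
  rw [codegree_starFamily]
  by_cases hTE : T ⊆ E
  · have hzero : #(T \ E) = 0 := card_eq_zero.mpr (sdiff_eq_empty_iff_subset.mpr hTE)
    rw [if_pos hTE, if_neg (by omega), union_eq_right.mpr hTE,
      card_filter_powersetCard_superset (subset_univ E) (by omega), card_univ, hE,
      show m + 1 - m = 1 by omega, Nat.choose_one_right, add_zero]
  rw [if_neg hTE, zero_add]
  have hpos : #(T \ E) ≠ 0 := fun h => hTE (sdiff_eq_empty_iff_subset.mp (card_eq_zero.mp h))
  by_cases h1 : #(T \ E) = 1
  · rw [if_pos h1, card_filter_powersetCard_superset (subset_univ _) (by omega), hcard, h1,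
      add_comm, Nat.sub_self, Nat.choose_zero_right, one_pow]
  · rw [if_neg h1, filter_powersetCard_superset_eq_empty (by omega), card_empty,
      zero_pow two_ne_zero]

theorem sum_codegree_starFamily_sq_eq_add (T : Finset α) (m : ℕ) :
    ∑ E ∈ univ.powersetCard m, codegree (starFamily T (m + 1)) E ^ 2 =
      (Fintype.card α - m) ^ 2 * #{E ∈ univ.powersetCard m | T ⊆ E} +
        #{E ∈ univ.powersetCard m | #(T \ E) = 1} := by
  rw [sum_congr rfl fun E hE => codegree_starFamily_sq (mem_powersetCard.mp hE).2,
    sum_add_distrib]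
  simp [sum_ite, mul_comm]

theorem sum_codegree_starFamily_sq {T : Finset α} {m : ℕ} (hTm : #T ≤ m + 1) :
    ∑ E ∈ univ.powersetCard m, codegree (starFamily T (m + 1)) E ^ 2 =
      (Fintype.card α - #T).choose (m + 1 - #T) *
        (#T + (Fintype.card α - m) * (m + 1 - #T)) := by
  have hsup := card_filter_powersetCard_superset_mul (subset_univ T) hTm
  rw [sum_codegree_starFamily_sq_eq_add,
    card_filter_powersetCard_card_sdiff_eq_one (subset_univ T) hTm]
  rw [card_univ] at hsup ⊢
  set N := Fintype.card α
  set X := #{E ∈ univ.powersetCard m | T ⊆ E}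
  set C := (N - #T).choose (m + 1 - #T)
  calc (N - m) ^ 2 * X + #T * C = (N - m) * (X * (N - m)) + #T * C := by ring
    _ = C * (#T + (N - m) * (m + 1 - #T)) := by rw [hsup]; ring

end Star

/-- Codegree squared sum of the `t`-star: for `t ≤ k ≤ n`,
`co₂({F ∈ C([n],k) : [t] ⊆ F}) = C(n-t,k-t)·(t + (n-k+1)(k-t))`. -/
theorem co2_t_star (n k t : ℕ) (hk : 1 ≤ k) (ht : t ≤ k) (hkn : k ≤ n) :
    ∑ E ∈ Finset.univ.powersetCard (k - 1),
        ((((Finset.univ.powersetCard k).filter fun A : Finset (Fin n) =>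
            (Finset.univ.filter fun v : Fin n => (v : ℕ) < t) ⊆ A).filter
              fun A => E ⊆ A).card) ^ 2 =
      (n - t).choose (k - t) * (t + (n - k + 1) * (k - t)) := by
  obtain ⟨m, rfl⟩ : ∃ m, k = m + 1 := ⟨k - 1, by omega⟩
  have hT : #{v : Fin n | (v : ℕ) < t} = t := by rw [Fin.card_filter_val_lt]; omega
  have key := sum_codegree_starFamily_sq (T := {v : Fin n | (v : ℕ) < t}) (m := m) (by omega)
  rw [hT, Fintype.card_fin, show n - m = n - (m + 1) + 1 by omega] at key
  rw [Nat.add_sub_cancel]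
  exact key
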